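/- Let A be a countable-dimensional F-algebra with GKdim A ≤ d, and let B be an infinite-dimensional unital F-algebra generated by a finite-dimensional subspace V. Then there exists a generating linear transformation γ: B → A such that w_γ(n) ≤ n^{d+ε_n} for all sufficiently large n, where ε_n > 0 and ε_n → 0 as n → ∞; equivalently, for every ε > 0 one has w_γ(n) ≤ n^{d+ε} for all sufficiently large n. -/

import Mathlib

open TensorProduct

noncomputable section

universe u v w

/-- `pwAux mul x n = x^(n+1)` (left-normed powers) with respect to a multiplication `mul`. -/
def pwAux {P : Type*} (mul : P → P → P) (x : P) : ℕ → P
  | 0 => x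
  | n + 1 => mul x (pwAux mul x n)

/-- `pw mul x n = x^n` for `n ≥ 1`, with the junk value `pw mul x 0 = 0`. -/
def pw {P : Type*} [Zero P] (mul : P → P → P) (x : P) : ℕ → P
  | 0 => 0
  | n + 1 => pwAux mul x n

/-- Every element of `s` is nilpotent with respect to `mul`. -/
def IsNilMul {P : Type*} [Zero P] (mul : P → P → P) (s : Set P) : Prop :=
  ∀ x ∈ s, ∃ n : ℕ, 1 ≤ n ∧ pw mul x n = 0

/-- A (not necessarily unital) ring is nil iff every element is nilpotent. -/
def IsNilRing (R : Type*) [NonUnitalRing R] : Prop :=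
  IsNilMul (· * ·) (Set.univ : Set R)

/-- Every element of `s` satisfies a nonzero polynomial over `F` with zero constant term. -/
def IsAlgebraicMul (F : Type*) [Field F] {P : Type*} [AddCommGroup P] [Module F P]
    (mul : P → P → P) (s : Set P) : Prop :=
  ∀ x ∈ s, ∃ p : Polynomial F, p ≠ 0 ∧ p.coeff 0 = 0 ∧ (p.sum fun i c => c • pw mul x i) = 0

/-- An `F`-algebra is algebraic iff every element satisfies a nonzero polynomial over `F`
with zero constant term (equivalently, generates a finite-dimensional subalgebra). -/
def IsAlgebraicRing (F : Type*) [Field F] (R : Type*) [NonUnitalRing R] [Module F R] : Prop :=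
  IsAlgebraicMul F (· * ·) (Set.univ : Set R)

/-- `R` is stable nil: all matrix algebras `M_n(R)` are nil. -/
def IsStableNil (R : Type*) [NonUnitalRing R] : Prop :=
  ∀ n : ℕ, IsNilRing (Matrix (Fin n) (Fin n) R)

/-- `R` is stable algebraic: all matrix algebras `M_n(R)` are algebraic over `F`. -/
def IsStableAlgebraic (F : Type*) [Field F] (R : Type*) [NonUnitalRing R] [Module F R] : Prop :=
  ∀ n : ℕ, IsAlgebraicRing F (Matrix (Fin n) (Fin n) R)

/-- A (not necessarily unital) ring is Jacobson radical iff every element `a` is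
quasi-regular: there is `a'` with `a + a' + aa' = 0` and `a + a' + a'a = 0`. -/
def IsJacobsonRadical (R : Type*) [NonUnitalRing R] : Prop :=
  ∀ a : R, ∃ a' : R, a + a' + a * a' = 0 ∧ a + a' + a' * a = 0

/-- `C` is finitely generated as a (non-unital) `F`-algebra. -/
def IsFinGenAlg (F : Type*) [Field F] (C : Type*) [NonUnitalRing C] [Module F C]
    [SMulCommClass F C C] [IsScalarTower F C C] : Prop :=
  ∃ s : Finset C, NonUnitalAlgebra.adjoin F (s : Set C) = ⊤

/-- `IsWord mul s k x` : `x` is a product (with some bracketing) of `k` factors from `s`. -/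
inductive IsWord {P : Type*} (mul : P → P → P) (s : Set P) : ℕ → P → Prop
  | base {x : P} : x ∈ s → IsWord mul s 1 x
  | mul {m n : ℕ} {x y : P} : IsWord mul s m x → IsWord mul s n y →
      IsWord mul s (m + n) (mul x y)

/-- The span `U^{≤n}` of all products of at most `n` factors from `U` (w.r.t. `mul`). -/
def wordSpan (F : Type*) [Field F] {P : Type*} [AddCommGroup P] [Module F P]
    (mul : P → P → P) (U : Submodule F P) (n : ℕ) : Submodule F P :=
  Submodule.span F {x | ∃ k, 1 ≤ k ∧ k ≤ n ∧ IsWord mul (U : Set P) k x}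

/-- The growth function `g(U, n) = dim_F U^{≤n}` of the subspace `U` w.r.t. `mul`. -/
def growthFn (F : Type*) [Field F] {P : Type*} [AddCommGroup P] [Module F P]
    (mul : P → P → P) (U : Submodule F P) (n : ℕ) : ℕ :=
  Module.finrank F (wordSpan F mul U n)

/-- `GKdimLE F R d` : the Gelfand–Kirillov dimension of the `F`-algebra `R` is at most `d`,
i.e. for every finite-dimensional subspace `U` and every `α > d` one has
`g(U, n) ≼ n^α`. -/
def GKdimLE (F : Type*) [Field F] (R : Type*) [NonUnitalRing R] [Module F R] (d : ℝ) : Prop :=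
  ∀ U : Submodule F R, FiniteDimensional F U → ∀ α : ℝ, d < α →
    ∃ c : ℕ, 0 < c ∧ ∀ n : ℕ, (growthFn F (· * ·) U n : ℝ) ≤ c * ((c * n : ℕ) : ℝ) ^ α

/-- `GKdimEQ F R d` : the Gelfand–Kirillov dimension of `R` is exactly `d`. -/
def GKdimEQ (F : Type*) [Field F] (R : Type*) [NonUnitalRing R] [Module F R] (d : ℝ) : Prop :=
  GKdimLE F R d ∧ ∀ e : ℝ, GKdimLE F R e → d ≤ e

section Wreath

variable (F : Type*) [Field F]
variable (A : Type*) [NonUnitalRing A] [Module F A] [SMulCommClass F A A] [IsScalarTower F A A]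
variable (B : Type*) [NonUnitalRing B] [Module F B] [SMulCommClass F B B] [IsScalarTower F B B]

/-- The multiplication `fg = (1 ⊗ μ) ∘ (f ⊗ 1) ∘ g` on `Lin(B, B ⊗ A)`. -/
def wrMul (f g : B →ₗ[F] B ⊗[F] A) : B →ₗ[F] B ⊗[F] A :=
  (LinearMap.lTensor B (LinearMap.mul' F A)) ∘ₗ (TensorProduct.assoc F B A A).toLinearMap ∘ₗ
    (LinearMap.rTensor A f) ∘ₗ g

/-- The left action of `B` on `Lin(B, B ⊗ A)` : `(bf)(b') = (b ⊗ 1) f(b')`. -/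
def actL (b : B) (f : B →ₗ[F] B ⊗[F] A) : B →ₗ[F] B ⊗[F] A :=
  (LinearMap.rTensor A (LinearMap.mulLeft F b)) ∘ₗ f

/-- The right action of `B` on `Lin(B, B ⊗ A)` : `(fb)(b') = f(bb')`. -/
def actR (f : B →ₗ[F] B ⊗[F] A) (b : B) : B →ₗ[F] B ⊗[F] A :=
  f ∘ₗ LinearMap.mulLeft F b

/-- The multiplication of the matrix wreath product `A ≀ B = B ⊕ Lin(B, B ⊗ A)`,
extending the multiplications of `B` and of `Lin(B, B ⊗ A)` via the two `B`-actions. -/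
def wm (x y : B × (B →ₗ[F] B ⊗[F] A)) : B × (B →ₗ[F] B ⊗[F] A) :=
  (x.1 * y.1, wrMul F A B x.2 y.2 + actL F A B x.1 y.2 + actR F A B x.2 y.1)

/-- `S(A,B)` : all `f : B → B ⊗ A` with `f(B) ⊆ V ⊗ A` for some finite-dimensional
subspace `V ⊆ B`. -/
def SAB : Set (B →ₗ[F] B ⊗[F] A) :=
  {f | ∃ V : Submodule F B, FiniteDimensional F V ∧
    LinearMap.range f ≤ LinearMap.range (LinearMap.rTensor A V.subtype)}

/-- The matrix entry `a_{ij}` of `f : B → B ⊗ A` w.r.t. a basis `β` of `B`, determined by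
`f(β j) = Σ_i (β i) ⊗ a_{ij}`. -/
def entryOf {I : Type*} [DecidableEq I] (β : Module.Basis I F B) (f : B →ₗ[F] B ⊗[F] A)
    (i j : I) : A :=
  (TensorProduct.finsuppScalarLeft F A I
    ((LinearMap.rTensor A β.repr.toLinearMap) (f (β j)))) i

/-- `M_∞(A)` : the elements of `Lin(B, B ⊗ A)` whose matrix w.r.t. the basis `β` has only
finitely many nonzero entries. -/
def MinfSet {I : Type*} [DecidableEq I] (β : Module.Basis I F B) : Set (B →ₗ[F] B ⊗[F] A) :=
  {f | {p : I × I | entryOf F A B β f p.1 p.2 ≠ 0}.Finite}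

end Wreath

section UnitalB

variable (F : Type*) [Field F]
variable (A : Type*) [NonUnitalRing A] [Module F A] [SMulCommClass F A A] [IsScalarTower F A A]
variable (B : Type*) [Ring B] [Algebra F B]

/-- The element `c_γ : b ↦ 1 ⊗ γ(b)` of `Lin(B, B ⊗ A)`. -/
def cgam (γ : B →ₗ[F] A) : B →ₗ[F] B ⊗[F] A :=
  (TensorProduct.mk F B A 1) ∘ₗ γ

/-- `GammaWord γ V k a` : `a` is a product `γ(v₁)⋯γ(v_r)` with `v_j ∈ V^{i_j}` and
`i₁ + ⋯ + i_r = k`, `i_j ≥ 1`. -/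
inductive GammaWord (γ : B →ₗ[F] A) (V : Submodule F B) : ℕ → A → Prop
  | base {i : ℕ} (hi : 1 ≤ i) {b : B} (hb : b ∈ wordSpan F (· * ·) V i) :
      GammaWord γ V i (γ b)
  | mul {m n : ℕ} {a a' : A} : GammaWord γ V m a → GammaWord γ V n a' →
      GammaWord γ V (m + n) (a * a')

/-- The subspace `W_n = Σ_{i₁+⋯+i_r ≤ n} γ(V^{i₁})⋯γ(V^{i_r})` of `A`. -/
def Wspan (γ : B →ₗ[F] A) (V : Submodule F B) (n : ℕ) : Submodule F A :=
  Submodule.span F {a | ∃ k, k ≤ n ∧ GammaWord F A B γ V k a}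

/-- `w_γ(n) = dim_F W_n`. -/
def wfn (γ : B →ₗ[F] A) (V : Submodule F B) (n : ℕ) : ℕ :=
  Module.finrank F (Wspan F A B γ V n)

end UnitalB

section PrimePrimitive

variable {P : Type v} [AddCommGroup P]

/-- `I` is a two-sided ideal of the subalgebra of the ambient algebra `(P, mul)` given by the
additive subgroup `T`. -/
def IsIdealIn (mul : P → P → P) (T I : AddSubgroup P) : Prop :=
  I ≤ T ∧ ∀ x ∈ T, ∀ y ∈ I, mul x y ∈ I ∧ mul y x ∈ I

/-- The subalgebra `T` of `(P, mul)` is a prime algebra: the product of two nonzero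
two-sided ideals is nonzero. -/
def IsPrimeIn (mul : P → P → P) (T : AddSubgroup P) : Prop :=
  ∀ I J : AddSubgroup P, IsIdealIn mul T I → IsIdealIn mul T J →
    (∀ a ∈ I, ∀ b ∈ J, mul a b = 0) → I = ⊥ ∨ J = ⊥

/-- The subalgebra `T` of `(P, mul)` is a (left) primitive algebra: it has a faithful
irreducible left module. -/
def IsPrimitiveIn (mul : P → P → P) (T : AddSubgroup P) : Prop :=
  ∃ (M : Type v) (_ : AddCommGroup M) (ρ : P → AddMonoid.End M),
    (∀ x ∈ T, ∀ y ∈ T, ρ (x + y) = ρ x + ρ y) ∧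
    (∀ x ∈ T, ∀ y ∈ T, ρ (mul x y) = ρ x * ρ y) ∧
    Set.InjOn ρ (T : Set P) ∧
    (∃ x ∈ T, ∃ m : M, (ρ x) m ≠ 0) ∧
    (∀ m : M, m ≠ 0 → ∀ y : M, ∃ x ∈ T, (ρ x) m = y)

end PrimePrimitive

/-- A (not necessarily unital) ring is (left) primitive: it has a faithful irreducible
left module. -/
def IsPrimitiveRing (R : Type v) [NonUnitalRing R] : Prop :=
  ∃ (M : Type v) (_ : AddCommGroup M) (ρ : R →ₙ+* AddMonoid.End M),
    Function.Injective ρ ∧ (∃ r : R, ∃ m : M, (ρ r) m ≠ 0) ∧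
    (∀ m : M, m ≠ 0 → ∀ y : M, ∃ r : R, (ρ r) m = y)

/-- The multiplication of `M_∞(A)`, realized as finitely supported `ℕ × ℕ` matrices over `A`. -/
def minfMul {A : Type*} [NonUnitalRing A] (x y : (ℕ × ℕ) →₀ A) : (ℕ × ℕ) →₀ A :=
  x.sum fun p a => y.sum fun q b => if p.2 = q.1 then Finsupp.single (p.1, q.2) (a * b) else 0

end


open Filter Submodule

/-!
Enumerate a spanning sequence `a₀, a₁, …` of `A` and let `U_k = span {a_i : i < k}`; since
`GKdim A ≤ d`, `g(U_k, n) ≤ c_k (c_k n)^{d + 1/(k+1)}`. As `B` is infinite-dimensional, the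
filtration `V^n` never stabilises, so there are `n₀ < n₁ < ⋯`, as sparse as we like, with
`V^{n₀} < V^{n₁} < ⋯`. Functionals `ψ_k` vanishing on `V^{n_k}` but not on `V^{n_{k+1}}` give a
surjective `γ = Σ_k ψ_k(·) a_k` with `γ(V^{n_k}) ⊆ U_k`. Hence `W_n ⊆ U_{J+1}^n` for
`n_J < n ≤ n_{J+1}`, and taking `n_J` past the point where
`c_{J+1} (c_{J+1} n)^{d + 1/(J+2)} ≤ n^{d + 1/(J+1)}` gives `w_γ(n) ≤ n^{d + 1/(J+1)}`.
-/

theorem IsWord.one_le {P : Type*} {mul : P → P → P} {s : Set P} {k : ℕ} {x : P}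
    (h : IsWord mul s k x) : 1 ≤ k := by
  induction h <;> omega

section WordSpan

variable {F : Type*} [Field F]

theorem wordSpan_mono {P : Type*} [AddCommGroup P] [Module F P] (mul : P → P → P)
    (U : Submodule F P) : Monotone (wordSpan F mul U) :=
  fun _ _ h => span_mono fun _ ⟨k, h1, h2, hw⟩ => ⟨k, h1, h2.trans h, hw⟩

theorem le_wordSpan {P : Type*} [AddCommGroup P] [Module F P] (mul : P → P → P)
    (U : Submodule F P) {n : ℕ} (hn : 1 ≤ n) : U ≤ wordSpan F mul U n :=
  fun _ hx => subset_span ⟨1, le_rfl, hn, .base hx⟩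

variable {A : Type*} [NonUnitalRing A] [Module F A] [SMulCommClass F A A] [IsScalarTower F A A]

theorem map₂_mul_wordSpan_le (U : Submodule F A) (m n : ℕ) :
    map₂ (LinearMap.mul F A) (wordSpan F (· * ·) U m) (wordSpan F (· * ·) U n) ≤
      wordSpan F (· * ·) U (m + n) := by
  rw [wordSpan, wordSpan, map₂_span_span]
  refine span_mono ?_
  rintro _ ⟨x, ⟨k, hk, hkm, hx⟩, y, ⟨l, hl, hln, hy⟩, rfl⟩
  exact ⟨k + l, by omega, by omega, hx.mul hy⟩

theorem mul_mem_wordSpan {U : Submodule F A} {m n : ℕ} {x y : A}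
    (hx : x ∈ wordSpan F (· * ·) U m) (hy : y ∈ wordSpan F (· * ·) U n) :
    x * y ∈ wordSpan F (· * ·) U (m + n) :=
  map₂_mul_wordSpan_le U m n (apply_mem_map₂ (LinearMap.mul F A) hx hy)

theorem wordSpan_succ_le (U : Submodule F A) (n : ℕ) :
    wordSpan F (· * ·) U (n + 1) ≤
      U ⊔ map₂ (LinearMap.mul F A) (wordSpan F (· * ·) U n) (wordSpan F (· * ·) U n) := by
  refine span_le.mpr ?_
  rintro _ ⟨k, -, hk, hw⟩
  cases hw with
  | base hx => exact mem_sup_left hx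
  | @mul m l x y hx hy =>
    have hm := hx.one_le
    have hl := hy.one_le
    exact mem_sup_right (apply_mem_map₂ (LinearMap.mul F A)
      (subset_span ⟨m, hm, by omega, hx⟩) (subset_span ⟨l, hl, by omega, hy⟩))

instance finiteDimensional_wordSpan (U : Submodule F A) [FiniteDimensional F U] (n : ℕ) :
    FiniteDimensional F (wordSpan F (· * ·) U n) := by
  induction n with
  | zero =>
    have : wordSpan F (· * ·) U 0 = ⊥ := span_eq_bot.mpr fun _ ⟨_, h1, h0, _⟩ => by omega
    rw [this]
    infer_instance
  | succ n ih =>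
    have hfg := (fg_iff_finiteDimensional _).mpr ih
    have := (fg_iff_finiteDimensional _).mp (hfg.map₂ (LinearMap.mul F A) hfg)
    exact finiteDimensional_of_le (wordSpan_succ_le U n)

end WordSpan

section UnitalGenerators

variable {F : Type*} [Field F] {B : Type*} [Ring B] [Algebra F B] {V : Submodule F B}

theorem sup_one_eq_top_of_mul_le (hV : Algebra.adjoin F (V : Set B) = ⊤) {P : Submodule F B}
    (hVP : V ≤ P) (hPP : P * P ≤ P) : P ⊔ 1 = ⊤ := by
  have hmul : (P ⊔ 1) * (P ⊔ 1) ≤ P ⊔ 1 := by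
    simp only [Submodule.mul_sup, Submodule.sup_mul, mul_one, one_mul, sup_le_iff, le_sup_left,
      le_sup_right, and_true]
    exact le_sup_of_le_left hPP
  let S : Subalgebra F B := (P ⊔ 1).toSubalgebra (Submodule.one_le.mp le_sup_right)
    fun _ _ hx hy => hmul (mul_mem_mul hx hy)
  have hS : S = ⊤ := eq_top_iff.mpr (hV ▸ Algebra.adjoin_le fun _ hx => mem_sup_left (hVP hx))
  exact eq_top_iff.mpr fun x _ => show x ∈ S from hS ▸ Algebra.mem_top

theorem exists_wordSpan_lt (hB : ¬ FiniteDimensional F B) [FiniteDimensional F V]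
    (hV : Algebra.adjoin F (V : Set B) = ⊤) (m : ℕ) :
    ∃ n, wordSpan F (· * ·) V m < wordSpan F (· * ·) V n := by
  by_contra! hstable
  have hle : ∀ n, wordSpan F (· * ·) V n ≤ wordSpan F (· * ·) V m := fun n =>
    (le_total n m).elim (fun h => wordSpan_mono _ V h)
      fun h => not_lt_iff_le_imp_ge.mp (hstable n) (wordSpan_mono _ V h)
  have htop := sup_one_eq_top_of_mul_le hV ((le_wordSpan _ V le_rfl).trans (hle 1))
    (mul_le.mpr fun _ hx _ hy => hle _ (mul_mem_wordSpan hx hy))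
  have : FiniteDimensional F (wordSpan F (· * ·) V m ⊔ 1 : Submodule F B) := by
    rw [one_eq_span]
    infer_instance
  rw [htop] at this
  exact hB (Module.Finite.equiv topEquiv)

end UnitalGenerators

theorem Monotone.exists_strictMono_comp {α : Type*} [Preorder α] {f : ℕ → α} (hf : Monotone f)
    (h : ∀ m, ∃ n, f m < f n) (T : ℕ → ℕ) :
    ∃ s : ℕ → ℕ, (∀ k, T k ≤ s k) ∧ StrictMono s ∧ StrictMono (f ∘ s) := by
  choose g hg using h
  let s : ℕ → ℕ := fun k => Nat.rec (T 0) (fun k sk => max (g sk) (T (k + 1))) k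
  have hfs : StrictMono (f ∘ s) :=
    strictMono_nat_of_lt_succ fun k => (hg (s k)).trans_le (hf (le_max_left _ _))
  refine ⟨s, fun k => ?_, strictMono_nat_of_lt_succ fun k => ?_, hfs⟩
  · cases k with
    | zero => exact le_rfl
    | succ k => exact le_max_right _ _
  · exact lt_of_not_ge fun hle => (hfs k.lt_succ_self).not_ge (hf hle)

section TriangularMap

variable {F : Type*} [Field F] {B : Type*} [AddCommGroup B] [Module F B]
  {A : Type*} [AddCommGroup A] [Module F A]

theorem exists_dual_seq_of_strictMono {W : ℕ → Submodule F B} (hW : StrictMono W) :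
    ∃ ψ : ℕ → Module.Dual F B, (∀ j k, j ≤ k → ∀ x ∈ W j, ψ k x = 0) ∧
      (∀ x, ∀ᶠ k in atTop, ψ k x = 0) ∧ ∀ k, ∃ x ∈ W (k + 1), ψ k x ≠ 0 := by
  obtain ⟨C, hC⟩ := Submodule.exists_isCompl (⨆ k, W k)
  -- modularity: `(W k ⊔ C) ⊓ ⨆ W = W k`
  have hnot_le : ∀ k, ¬ W (k + 1) ≤ W k ⊔ C := fun k hle => (hW k.lt_succ_self).not_ge <| by
    rw [← sup_bot_eq (W k), ← hC.inf_eq_bot, inf_comm, ← sup_inf_assoc_of_le C (le_iSup W k)]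
    exact le_inf hle (le_iSup W (k + 1))
  have hsep : ∀ k, ∃ ψ : Module.Dual F B, (∀ x ∈ W k ⊔ C, ψ x = 0) ∧ ∃ x ∈ W (k + 1), ψ x ≠ 0 :=
    fun k => by
      obtain ⟨x, hx, hxC⟩ := SetLike.not_le_iff_exists.mp (hnot_le k)
      obtain ⟨ψ, hψx, hψ⟩ := exists_dual_map_eq_bot_of_notMem hxC inferInstance
      exact ⟨ψ, fun y hy => (Submodule.eq_bot_iff _).mp hψ _ (mem_map_of_mem hy), x, hx, hψx⟩
  choose ψ hψ hψ_ne using hsep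
  have hψW : ∀ j k, j ≤ k → ∀ x ∈ W j, ψ k x = 0 := fun j k hjk x hx =>
    hψ k x (mem_sup_left (hW.monotone hjk hx))
  refine ⟨ψ, hψW, fun x => ?_, hψ_ne⟩
  obtain ⟨s, hs, c, hc, rfl⟩ := mem_sup.mp (hC.sup_eq_top ▸ mem_top : x ∈ (⨆ k, W k) ⊔ C)
  obtain ⟨j, hj⟩ := (mem_iSup_of_directed W hW.monotone.directed_le).mp hs
  filter_upwards [eventually_ge_atTop j] with k hk
  rw [map_add, hψW j k hk s hj, hψ k c (mem_sup_right hc), add_zero]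

theorem exists_linearMap_eq_sum_range {ψ : ℕ → Module.Dual F B}
    (hψ : ∀ x, ∀ᶠ k in atTop, ψ k x = 0) (a : ℕ → A) :
    ∃ γ : B →ₗ[F] A, ∀ x j, (∀ k, j ≤ k → ψ k x = 0) →
      γ x = ∑ k ∈ Finset.range j, ψ k x • a k := by
  have hsupp : ∀ x j, (∀ k, j ≤ k → ψ k x = 0) →
      (Function.support fun k => ψ k x • a k) ⊆ Set.Iio j := fun x j hj k hk =>
    Set.mem_Iio.mpr (lt_of_not_ge fun hjk => hk (by simp [hj k hjk]))
  have hfin : ∀ x, (Function.support fun k => ψ k x • a k).Finite := fun x => by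
    obtain ⟨j, hj⟩ := eventually_atTop.mp (hψ x)
    exact (Set.finite_Iio j).subset (hsupp x j hj)
  refine ⟨{ toFun := fun x => ∑ᶠ k, ψ k x • a k
            map_add' := fun x y => by
              simp only [map_add, add_smul, finsum_add_distrib (hfin x) (hfin y)]
            map_smul' := fun c x => by
              simp only [map_smul, smul_eq_mul, mul_smul, smul_finsum' c (hfin x),
                RingHom.id_apply] }, fun x j hj => ?_⟩
  exact finsum_eq_sum_of_support_subset _ (by simpa using hsupp x j hj)

theorem exists_linearMap_of_strictMono {W : ℕ → Submodule F B} (hW : StrictMono W)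
    (a : ℕ → A) : ∃ γ : B →ₗ[F] A,
      (∀ k, ∀ x ∈ W k, γ x ∈ span F (a '' Set.Iio k)) ∧ Set.range a ⊆ LinearMap.range γ := by
  obtain ⟨ψ, hψW, hψ, hψ_ne⟩ := exists_dual_seq_of_strictMono hW
  obtain ⟨γ, hγ⟩ := exists_linearMap_eq_sum_range hψ a
  have hγW : ∀ k, ∀ x ∈ W k, γ x = ∑ i ∈ Finset.range k, ψ i x • a i := fun k x hx =>
    hγ x k fun i hi => hψW k i hi x hx
  refine ⟨γ, fun k x hx => ?_, ?_⟩
  · rw [hγW k x hx]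
    exact sum_mem fun i hi => smul_mem _ _ (subset_span ⟨i, Finset.mem_range.mp hi, rfl⟩)
  · rintro _ ⟨k, rfl⟩
    induction k using Nat.strong_induction_on with
    | _ k ih =>
      obtain ⟨x, hx, hψx⟩ := hψ_ne k
      have hak : a k = (ψ k x)⁻¹ • (γ x - ∑ i ∈ Finset.range k, ψ i x • a i) := by
        rw [hγW _ x hx, Finset.sum_range_succ, add_sub_cancel_left, smul_smul,
          inv_mul_cancel₀ hψx, one_smul]
      rw [hak]
      exact smul_mem _ _ (sub_mem (LinearMap.mem_range_self γ x)
        (sum_mem fun i hi => smul_mem _ _ (ih i (Finset.mem_range.mp hi))))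

end TriangularMap

section GammaWords

variable {F : Type*} [Field F]
  {A : Type*} [NonUnitalRing A] [Module F A] [SMulCommClass F A A] [IsScalarTower F A A]
  {B : Type*} [Ring B] [Algebra F B] {γ : B →ₗ[F] A} {V : Submodule F B} {U : Submodule F A}

theorem Wspan_le_wordSpan {m n : ℕ} (hγ : ∀ x ∈ wordSpan F (· * ·) V m, γ x ∈ U) (hnm : n ≤ m) :
    Wspan F A B γ V n ≤ wordSpan F (· * ·) U n := by
  refine span_le.mpr ?_
  rintro _ ⟨k, hkn, hw⟩
  suffices ∀ {k a}, GammaWord F A B γ V k a → k ≤ m → a ∈ wordSpan F (· * ·) U k from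
    wordSpan_mono _ U hkn (this hw (hkn.trans hnm))
  intro k a hw
  induction hw with
  | base hi hb => exact fun hik => le_wordSpan _ U hi (hγ _ (wordSpan_mono _ V hik hb))
  | mul _ _ ih ih' => exact fun h => mul_mem_wordSpan (ih (by omega)) (ih' (by omega))

theorem wfn_le_growthFn [FiniteDimensional F U] {m n : ℕ}
    (hγ : ∀ x ∈ wordSpan F (· * ·) V m, γ x ∈ U) (hnm : n ≤ m) :
    wfn F A B γ V n ≤ growthFn F (· * ·) U n :=
  finrank_mono (Wspan_le_wordSpan hγ hnm)

end GammaWords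

theorem exists_seq_span_range_eq_top {F M : Type*} [Field F] [AddCommGroup M] [Module F M]
    (h : Module.rank F M ≤ Cardinal.aleph0) : ∃ a : ℕ → M, span F (Set.range a) = ⊤ := by
  let b := Module.Basis.ofVectorSpace F M
  have : Countable (Module.Basis.ofVectorSpaceIndex F M) := by
    rw [← Cardinal.mk_le_aleph0_iff, b.mk_eq_rank'']
    exact h
  obtain ⟨a, ha⟩ := ((Set.countable_range b).insert 0).exists_eq_range (Set.insert_nonempty _ _)
  exact ⟨a, by rw [← ha, span_insert_zero, b.span_eq]⟩

theorem eventually_mul_rpow_le_rpow {c : ℕ} (hc : 0 < c) {α β : ℝ} (hαβ : α < β) :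
    ∀ᶠ n : ℕ in atTop, (c : ℝ) * ((c * n : ℕ) : ℝ) ^ α ≤ (n : ℝ) ^ β := by
  have hc' : (0 : ℝ) < c := by exact_mod_cast hc
  have htend : Tendsto (fun n : ℕ => (n : ℝ) ^ (β - α)) atTop atTop :=
    (tendsto_rpow_atTop (sub_pos.mpr hαβ)).comp tendsto_natCast_atTop_atTop
  filter_upwards [htend.eventually_ge_atTop ((c : ℝ) ^ (1 + α)), eventually_gt_atTop 0]
    with n hn hn0
  have hn0' : (0 : ℝ) < n := by exact_mod_cast hn0
  calc (c : ℝ) * ((c * n : ℕ) : ℝ) ^ α = (c : ℝ) ^ (1 + α) * (n : ℝ) ^ α := by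
        push_cast
        rw [Real.mul_rpow hc'.le hn0'.le, Real.rpow_add hc', Real.rpow_one, mul_assoc]
    _ ≤ (n : ℝ) ^ (β - α) * (n : ℝ) ^ α := by gcongr
    _ = (n : ℝ) ^ β := by rw [← Real.rpow_add hn0', sub_add_cancel]

theorem exists_forall_ge_le_rpow_add {f : ℕ → ℝ} {s : ℕ → ℕ} (hs : StrictMono s) {d : ℝ}
    (hf : ∀ J n, s J < n → n ≤ s (J + 1) → f n ≤ (n : ℝ) ^ (d + 1 / ((J : ℝ) + 1)))
    {ε : ℝ} (hε : 0 < ε) : ∃ N, ∀ n, N ≤ n → f n ≤ (n : ℝ) ^ (d + ε) := by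
  obtain ⟨k, hk⟩ := exists_nat_one_div_lt hε
  refine ⟨s k + 1, fun n hn => ?_⟩
  obtain ⟨J, hJn, hnJ⟩ := hs.exists_between_of_tendsto_atTop hs.tendsto_atTop (x := n)
    (by have := hs.monotone k.zero_le; omega)
  have hkJ : k ≤ J := by
    by_contra! h
    have : s (J + 1) ≤ s k := hs.monotone h
    omega
  have hn : (1 : ℝ) ≤ n := by exact_mod_cast (by omega : 1 ≤ n)
  refine (hf J n hJn hnJ).trans (Real.rpow_le_rpow_of_exponent_le hn ?_)
  have : 1 / ((J : ℝ) + 1) ≤ 1 / ((k : ℝ) + 1) :=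
    one_div_le_one_div_of_le (by positivity) (by exact_mod_cast Nat.add_le_add_right hkJ 1)
  linarith

/-- **Lemma 7.** Let `A` be a countable-dimensional `F`-algebra with `GKdim A ≤ d`, and let
`B` be an infinite-dimensional unital `F`-algebra generated by a finite-dimensional
subspace `V`. Then there exists a generating linear transformation `γ : B → A` such that
for every `ε > 0` one has `w_γ(n) ≤ n^{d+ε}` for all sufficiently large `n`. -/
theorem lemma7_generating_map_with_small_growth
    (F : Type*) [Field F]
    (A : Type*) [NonUnitalRing A] [Module F A] [SMulCommClass F A A] [IsScalarTower F A A]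
    (hcount : Module.rank F A ≤ Cardinal.aleph0)
    (d : ℝ) (hGK : GKdimLE F A d)
    (B : Type*) [Ring B] [Algebra F B] (hB : ¬ FiniteDimensional F B)
    (V : Submodule F B) [FiniteDimensional F V]
    (hV : Algebra.adjoin F (V : Set B) = ⊤) :
    ∃ γ : B →ₗ[F] A, NonUnitalAlgebra.adjoin F (Set.range γ) = ⊤ ∧
      ∀ ε : ℝ, 0 < ε → ∃ N : ℕ, ∀ n : ℕ, N ≤ n →
        (wfn F A B γ V n : ℝ) ≤ (n : ℝ) ^ (d + ε) := by
  obtain ⟨a, ha⟩ := exists_seq_span_range_eq_top hcount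
  set U : ℕ → Submodule F A := fun k => span F (a '' Set.Iio k)
  have hU (k : ℕ) : FiniteDimensional F (U k) :=
    FiniteDimensional.span_of_finite F ((Set.finite_Iio k).image a)
  set α : ℕ → ℝ := fun k => d + 1 / ((k : ℝ) + 1)
  have hdα (k : ℕ) : d < α k := lt_add_of_pos_right d Nat.one_div_pos_of_nat
  have hα (k : ℕ) : α (k + 1) < α k := by
    simp only [α]
    push_cast
    gcongr
    linarith
  choose c hc0 hc using fun k => hGK (U k) (hU k) (α k) (hdα k)
  choose T hT using fun k => eventually_atTop.mp (eventually_mul_rpow_le_rpow (hc0 (k + 1)) (hα k))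
  obtain ⟨s, hsT, hs, hWs⟩ :=
    (wordSpan_mono _ V).exists_strictMono_comp (exists_wordSpan_lt hB hV) T
  obtain ⟨γ, hγU, hγa⟩ := exists_linearMap_of_strictMono hWs a
  have hγ : LinearMap.range γ = ⊤ := top_le_iff.mp (ha ▸ span_le.mpr hγa)
  refine ⟨γ, ?_, fun ε hε => exists_forall_ge_le_rpow_add hs (fun J n hJn hnJ => ?_) hε⟩
  · rw [(LinearMap.range_eq_top.mp hγ).range_eq, NonUnitalAlgebra.adjoin_univ]
  · calc (wfn F A B γ V n : ℝ) ≤ growthFn F (· * ·) (U (J + 1)) n := by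
          have := hU (J + 1)
          exact_mod_cast wfn_le_growthFn (hγU (J + 1)) hnJ
      _ ≤ c (J + 1) * ((c (J + 1) * n : ℕ) : ℝ) ^ α (J + 1) := hc (J + 1) n
      _ ≤ (n : ℝ) ^ α J := hT J n ((hsT J).trans hJn.le)
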